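/- Let C, μ, q be as above. If μ1² < q²·c11 and μᵀC⁻¹μ > q², then the set {r ∈ ℝ : (μ2 − r·μ1)² ≤ q²·(c22 − 2·r·c12 + r²·c11)} equals (−∞, min(l1,l2)] ∪ [max(l1,l2), ∞), with l1, l2 as in Fieller's formula. -/

import Mathlib

/-!
Multiplied out, Fieller's inequality reads `a r² - 2 b r + c ≤ 0` with `a = μ1² - q² c11 < 0`,
`b = μ1 μ2 - q² c12`, `c = μ2² - q² c22`. Its half-discriminant is
`b² - a c = q² det C (μᵀC⁻¹μ - q²) ≥ 0`, and with `s = √(b² - a c)` we get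
`a (a r² - 2 b r + c) = (a r - (b - s)) (a r - (b + s))`. As `a < 0`, the quadratic is
nonpositive exactly outside the open interval between its roots `(b ± s) / a`.
-/

open Matrix

lemma mul_quadratic_eq_mul_sub_roots {a b c s : ℝ} (hs : s ^ 2 = b ^ 2 - a * c) (r : ℝ) :
    a * (a * r ^ 2 - 2 * b * r + c) = (a * r - (b - s)) * (a * r - (b + s)) := by
  linear_combination hs

lemma quadratic_nonpos_iff_of_neg {a b c : ℝ} (ha : a < 0) (hdisc : 0 ≤ b ^ 2 - a * c)
    (r : ℝ) :
    a * r ^ 2 - 2 * b * r + c ≤ 0 ↔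
      r ≤ (b + √(b ^ 2 - a * c)) / a ∨ (b - √(b ^ 2 - a * c)) / a ≤ r := by
  set s := √(b ^ 2 - a * c)
  have hs : 0 ≤ s := Real.sqrt_nonneg _
  have hmul : a * r ^ 2 - 2 * b * r + c ≤ 0 ↔ 0 ≤ a * (a * r ^ 2 - 2 * b * r + c) :=
    ⟨mul_nonneg_of_nonpos_of_nonpos ha.le, (nonpos_of_mul_nonneg_right · ha)⟩
  rw [hmul, mul_quadratic_eq_mul_sub_roots (Real.sq_sqrt hdisc),
    sub_mul_sub_nonneg_iff _ (by linarith), le_div_iff_of_neg ha, div_le_iff_of_neg ha, mul_comm r,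
    or_comm]

lemma quadratic_nonpos_set_eq_of_neg {a b c : ℝ} (ha : a < 0) (hdisc : 0 ≤ b ^ 2 - a * c) :
    {r : ℝ | a * r ^ 2 - 2 * b * r + c ≤ 0} =
      Set.Iic (min ((b + √(b ^ 2 - a * c)) / a) ((b - √(b ^ 2 - a * c)) / a)) ∪
        Set.Ici (max ((b + √(b ^ 2 - a * c)) / a) ((b - √(b ^ 2 - a * c)) / a)) := by
  have hle : (b + √(b ^ 2 - a * c)) / a ≤ (b - √(b ^ 2 - a * c)) / a :=
    div_le_div_of_nonpos_of_le ha.le (by linarith [Real.sqrt_nonneg (b ^ 2 - a * c)])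
  ext r
  rw [min_eq_left hle, max_eq_right hle]
  exact quadratic_nonpos_iff_of_neg ha hdisc r

lemma dotProduct_inv_mulVec_fin_two (a b c d x y : ℝ) :
    ![x, y] ⬝ᵥ ((!![a, b; c, d] : Matrix (Fin 2) (Fin 2) ℝ)⁻¹ *ᵥ ![x, y]) =
      (d * x ^ 2 - (b + c) * x * y + a * y ^ 2) / (a * d - b * c) := by
  rw [inv_def, adjugate_fin_two_of, det_fin_two_of, Ring.inverse_eq_inv']
  simp only [smul_of, smul_cons, smul_eq_mul, smul_empty, mulVec_cons, mulVec_empty, add_zero,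
    Pi.add_apply, Pi.smul_apply, Function.comp_apply, dotProduct, Fin.sum_univ_two, cons_val_zero,
    cons_val_one, cons_val_fin_one, head_cons, tail_cons]
  ring

theorem stmt_5_general (c11 c12 c22 μ1 μ2 q : ℝ)
    (hC : (!![c11, c12; c12, c22] : Matrix (Fin 2) (Fin 2) ℝ).PosDef)
    (hb : μ1 ^ 2 < q ^ 2 * c11)
    (h0 : ![μ1, μ2] ⬝ᵥ
        ((!![c11, c12; c12, c22] : Matrix (Fin 2) (Fin 2) ℝ)⁻¹ *ᵥ ![μ1, μ2]) > q ^ 2) :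
    {r : ℝ | (μ2 - r * μ1) ^ 2 ≤ q ^ 2 * (c22 - 2 * r * c12 + r ^ 2 * c11)}
      = Set.Iic
          (min
            (((μ1 * μ2 - q ^ 2 * c12) +
                Real.sqrt ((μ1 * μ2 - q ^ 2 * c12) ^ 2 -
                  (μ1 ^ 2 - q ^ 2 * c11) * (μ2 ^ 2 - q ^ 2 * c22))) /
              (μ1 ^ 2 - q ^ 2 * c11))
            (((μ1 * μ2 - q ^ 2 * c12) -
                Real.sqrt ((μ1 * μ2 - q ^ 2 * c12) ^ 2 -
                  (μ1 ^ 2 - q ^ 2 * c11) * (μ2 ^ 2 - q ^ 2 * c22))) /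
              (μ1 ^ 2 - q ^ 2 * c11)))
        ∪ Set.Ici
          (max
            (((μ1 * μ2 - q ^ 2 * c12) +
                Real.sqrt ((μ1 * μ2 - q ^ 2 * c12) ^ 2 -
                  (μ1 ^ 2 - q ^ 2 * c11) * (μ2 ^ 2 - q ^ 2 * c22))) /
              (μ1 ^ 2 - q ^ 2 * c11))
            (((μ1 * μ2 - q ^ 2 * c12) -
                Real.sqrt ((μ1 * μ2 - q ^ 2 * c12) ^ 2 -
                  (μ1 ^ 2 - q ^ 2 * c11) * (μ2 ^ 2 - q ^ 2 * c22))) /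
              (μ1 ^ 2 - q ^ 2 * c11))) := by
  have hdet : 0 < c11 * c22 - c12 * c12 := by simpa [det_fin_two_of] using hC.det_pos
  have hquad : q ^ 2 * (c11 * c22 - c12 * c12) <
      c22 * μ1 ^ 2 - (c12 + c12) * μ1 * μ2 + c11 * μ2 ^ 2 := by
    rwa [gt_iff_lt, dotProduct_inv_mulVec_fin_two, lt_div_iff₀ hdet] at h0
  have hdisc : 0 ≤ (μ1 * μ2 - q ^ 2 * c12) ^ 2 -
      (μ1 ^ 2 - q ^ 2 * c11) * (μ2 ^ 2 - q ^ 2 * c22) := by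
    have hq2 : 0 ≤ q ^ 2 * ((c22 * μ1 ^ 2 - (c12 + c12) * μ1 * μ2 + c11 * μ2 ^ 2) -
        q ^ 2 * (c11 * c22 - c12 * c12)) :=
      mul_nonneg (sq_nonneg q) (by linarith)
    linear_combination hq2
  rw [← quadratic_nonpos_set_eq_of_neg (by linarith) hdisc]
  ext r
  rw [Set.mem_ofPred_eq, Set.mem_ofPred_eq, ← sub_nonpos]
  ring_nf

/-- Exclusive unbounded case of Fieller's theorem: if `μ1² < q²·c11` and
`μᵀC⁻¹μ > q²`, the solution set of Fieller's inequality is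
`(-∞, min(l1,l2)] ∪ [max(l1,l2), ∞)`. -/
theorem stmt_5 (c11 c12 c22 μ1 μ2 q : ℝ) (hq : 0 < q)
    (hC : (!![c11, c12; c12, c22] : Matrix (Fin 2) (Fin 2) ℝ).PosDef)
    (hb : μ1 ^ 2 < q ^ 2 * c11)
    (h0 : ![μ1, μ2] ⬝ᵥ
        ((!![c11, c12; c12, c22] : Matrix (Fin 2) (Fin 2) ℝ)⁻¹ *ᵥ ![μ1, μ2]) > q ^ 2) :
    {r : ℝ | (μ2 - r * μ1) ^ 2 ≤ q ^ 2 * (c22 - 2 * r * c12 + r ^ 2 * c11)}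
      = Set.Iic
          (min
            (((μ1 * μ2 - q ^ 2 * c12) +
                Real.sqrt ((μ1 * μ2 - q ^ 2 * c12) ^ 2 -
                  (μ1 ^ 2 - q ^ 2 * c11) * (μ2 ^ 2 - q ^ 2 * c22))) /
              (μ1 ^ 2 - q ^ 2 * c11))
            (((μ1 * μ2 - q ^ 2 * c12) -
                Real.sqrt ((μ1 * μ2 - q ^ 2 * c12) ^ 2 -
                  (μ1 ^ 2 - q ^ 2 * c11) * (μ2 ^ 2 - q ^ 2 * c22))) /
              (μ1 ^ 2 - q ^ 2 * c11)))
        ∪ Set.Ici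
          (max
            (((μ1 * μ2 - q ^ 2 * c12) +
                Real.sqrt ((μ1 * μ2 - q ^ 2 * c12) ^ 2 -
                  (μ1 ^ 2 - q ^ 2 * c11) * (μ2 ^ 2 - q ^ 2 * c22))) /
              (μ1 ^ 2 - q ^ 2 * c11))
            (((μ1 * μ2 - q ^ 2 * c12) -
                Real.sqrt ((μ1 * μ2 - q ^ 2 * c12) ^ 2 -
                  (μ1 ^ 2 - q ^ 2 * c11) * (μ2 ^ 2 - q ^ 2 * c22))) /
              (μ1 ^ 2 - q ^ 2 * c11))) :=
  stmt_5_general c11 c12 c22 μ1 μ2 q hC hb h0
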